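/- Let N = 2, and let a₁ := a_{11} < 0, a₂ := a_{22} < 0 be constants with a₁ + a₂ ≠ 0, and ζ₁, ζ₂ ∈ ℝ. Then the functions K(t,i) = (1/(a₁+a₂)²)[ ζ_{3−i} a_i (1 − e^{(a₁+a₂)(R−t)} + (a₁+a₂)(R−t)) + ζ_i ( a_{3−i}²(R−t) + a_i ( e^{(a₁+a₂)(R−t)} − 1 + a_{3−i}(R−t) ) ) ], i = 1,2, satisfy the ODE system K_t(t,1) + ζ₁ − a₁ K(t,2) + a₁ K(t,1) = 0 and K_t(t,2) + ζ₂ − a₂ K(t,1) + a₂ K(t,2) = 0 with terminal conditions K(R,1) = K(R,2) = 0. -/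

import Mathlib

/-!
With `s = a₁ + a₂` and `τ = R - t`, each `K(·, i)` is a linear combination of `τ` and
`e^{sτ} - 1`, hence vanishes at `τ = 0`; differentiating in `t` and clearing the
denominator `s²` turns each ODE into a polynomial identity in `a₁, a₂, ζ₁, ζ₂, τ, e^{sτ}`.
Swapping the two regimes maps `K(·, 1)` to `K(·, 2)`, so one computation covers both equations.
-/

open Real

/-- `postDefaultK a b ζ ξ R` is `K(·, i)` for the regime with rate `a` and running reward `ζ`,
the other regime having rate `b` and running reward `ξ`. -/
noncomputable def postDefaultK (a b ζ ξ R t : ℝ) : ℝ :=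
  (1 / (a + b) ^ 2) *
    (ξ * a * (1 - exp ((a + b) * (R - t)) + (a + b) * (R - t)) +
      ζ * (b ^ 2 * (R - t) + a * (exp ((a + b) * (R - t)) - 1 + b * (R - t))))

theorem postDefaultK_self (a b ζ ξ R : ℝ) : postDefaultK a b ζ ξ R R = 0 := by
  simp [postDefaultK]

theorem hasDerivAt_postDefaultK {a b : ℝ} (hab : a + b ≠ 0) (ζ ξ R t : ℝ) :
    HasDerivAt (postDefaultK a b ζ ξ R)
      (-(ζ - a * postDefaultK b a ξ ζ R t + a * postDefaultK a b ζ ξ R t)) t := by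
  have hτ : HasDerivAt (fun t => R - t) (-1) t := by
    simpa using (hasDerivAt_id t).const_sub R
  have hE : HasDerivAt (fun t => exp ((a + b) * (R - t)))
      (exp ((a + b) * (R - t)) * ((a + b) * -1)) t :=
    (hτ.const_mul (a + b)).exp
  have h := ((((((hasDerivAt_const t 1).sub hE).add (hτ.const_mul (a + b))).const_mul (ξ * a)).add
    (((hτ.const_mul (b ^ 2)).add
      (((hE.sub (hasDerivAt_const t 1)).add (hτ.const_mul b)).const_mul a)).const_mul ζ)).const_mul
    (1 / (a + b) ^ 2))
  refine h.congr_deriv ?_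
  simp only [postDefaultK, add_comm b a]
  field_simp
  ring

theorem stmt9_general (a1 a2 ζ1 ζ2 R : ℝ) (hsum : a1 + a2 ≠ 0)
    (K1 K2 : ℝ → ℝ)
    (hK1 : ∀ t, K1 t = (1 / (a1 + a2) ^ 2) *
      (ζ2 * a1 * (1 - Real.exp ((a1 + a2) * (R - t)) + (a1 + a2) * (R - t)) +
        ζ1 * (a2 ^ 2 * (R - t) +
          a1 * (Real.exp ((a1 + a2) * (R - t)) - 1 + a2 * (R - t)))))
    (hK2 : ∀ t, K2 t = (1 / (a1 + a2) ^ 2) *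
      (ζ1 * a2 * (1 - Real.exp ((a1 + a2) * (R - t)) + (a1 + a2) * (R - t)) +
        ζ2 * (a1 ^ 2 * (R - t) +
          a2 * (Real.exp ((a1 + a2) * (R - t)) - 1 + a1 * (R - t))))) :
    K1 R = 0 ∧ K2 R = 0 ∧
      (∀ t, HasDerivAt K1 (-(ζ1 - a1 * K2 t + a1 * K1 t)) t) ∧
      (∀ t, HasDerivAt K2 (-(ζ2 - a2 * K1 t + a2 * K2 t)) t) := by
  obtain rfl : K1 = postDefaultK a1 a2 ζ1 ζ2 R := funext hK1
  obtain rfl : K2 = postDefaultK a2 a1 ζ2 ζ1 R := by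
    funext t
    rw [hK2, postDefaultK, add_comm a2 a1]
  have hsum' : a2 + a1 ≠ 0 := by rwa [add_comm]
  exact ⟨postDefaultK_self .., postDefaultK_self .., hasDerivAt_postDefaultK hsum ζ1 ζ2 R,
    hasDerivAt_postDefaultK hsum' ζ2 ζ1 R⟩

/-- Closed-form solution of the two-regime post-default value-function ODE system
with homogeneous generator: the explicit functions `K(t,1)`, `K(t,2)` satisfy
`K_t(t,i) + ζ_i - a_i K(t,3-i) + a_i K(t,i) = 0` with `K(R,i) = 0`. -/
theorem stmt9 (a1 a2 ζ1 ζ2 R : ℝ) (ha1 : a1 < 0) (ha2 : a2 < 0) (hsum : a1 + a2 ≠ 0)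
    (K1 K2 : ℝ → ℝ)
    (hK1 : ∀ t, K1 t = (1 / (a1 + a2) ^ 2) *
      (ζ2 * a1 * (1 - Real.exp ((a1 + a2) * (R - t)) + (a1 + a2) * (R - t)) +
        ζ1 * (a2 ^ 2 * (R - t) +
          a1 * (Real.exp ((a1 + a2) * (R - t)) - 1 + a2 * (R - t)))))
    (hK2 : ∀ t, K2 t = (1 / (a1 + a2) ^ 2) *
      (ζ1 * a2 * (1 - Real.exp ((a1 + a2) * (R - t)) + (a1 + a2) * (R - t)) +
        ζ2 * (a1 ^ 2 * (R - t) +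
          a2 * (Real.exp ((a1 + a2) * (R - t)) - 1 + a1 * (R - t))))) :
    K1 R = 0 ∧ K2 R = 0 ∧
      (∀ t, HasDerivAt K1 (-(ζ1 - a1 * K2 t + a1 * K1 t)) t) ∧
      (∀ t, HasDerivAt K2 (-(ζ2 - a2 * K1 t + a2 * K2 t)) t) :=
  stmt9_general a1 a2 ζ1 ζ2 R hsum K1 K2 hK1 hK2
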